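/- arXiv:1610.02640 — 2 statements merged into one kernel-verified Lean document; each statement's English description precedes it below -/
import Mathlib

section
/- For a two-columned skew shape λ(a,b,c) = (2^{b+c}, 1^a)/(1^b) and a semistandard tableau T of shape λ(a,b,c) over a linearly ordered alphabet with r_T = 0 (i.e., the right column cannot be slid down even one position while keeping semistandardness), the operators 𝓔 (jeu de taquin sliding into the position below the bottom of the right column) and 𝓕 (jeu de taquin sliding into the position above the top of the left column) satisfy: 𝓔T and 𝓕T again have r = 0 whenever they are defined, and the set {𝓔^k T : 0 ≤ k ≤ a} ∪ {𝓕^l T : 0 ≤ l ≤ b} forms a regular sl_2-crystal with respect to 𝓔 and 𝓕. -/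
/-!
Statement 2: for a semistandard tableau `T` of the two-columned skew shape
`λ(a,b,c) = (2^{b+c},1^a)/(1^b)` with `r_T = 0`, the jeu de taquin operators `𝓔`, `𝓕`
again produce tableaux with `r = 0`, and `{𝓔^k T : k ≤ a} ∪ {𝓕^l T : l ≤ b}` forms a
regular `sl₂`-crystal (a single string of length `a+b` on which `𝓔` and `𝓕` are mutually
inverse raising/lowering operators).

A tableau is encoded as `(b, L, R) : ℕ × List ℕ × List ℕ` (`L`, `R` the left and right
columns written top-to-bottom, entries in a linearly ordered alphabet encoded in `ℕ`,
`L.length = c + a`, `R.length = b + c`).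
-/

namespace KN

/-- The `i`-th entry from the bottom (1-indexed) of a column written top-to-bottom. -/
def getB (l : List ℕ) (i : ℕ) : Option ℕ :=
  if 1 ≤ i ∧ i ≤ l.length then l[l.length - i]? else none

/-- Semistandardness of a two-column skew tableau of shape `λ(a,b,c)` with left column `L`
(of length `c+a`), right column `R` (of length `b+c`), both written top-to-bottom:
columns strictly increase and, in each of the `c` overlapping rows, the left entry is
no greater than the right entry. -/
def PairSSD (b : ℕ) (L R : List ℕ) : Prop :=
  L.Chain' (· < ·) ∧ R.Chain' (· < ·) ∧
    ∀ i x y, L[i]? = some x → R[b + i]? = some y → x ≤ y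

/-- `r_T = 0`: the right column of `T` cannot be slid down one position while keeping
semistandardness (automatic when `a = 0` or `b = 0`). -/
def SlideZero (a b : ℕ) (L R : List ℕ) : Prop :=
  a = 0 ∨ b = 0 ∨ ∃ i x y, L[i]? = some x ∧ R[b + i - 1]? = some y ∧ y < x

/-- State of a two-column skew tableau: `(b, L, R)` where `b` is the shape parameter
(length of the empty upper part of the left column). -/
abbrev TC := ℕ × List ℕ × List ℕ

def FCond (b : ℕ) (L R : List ℕ) (i : ℕ) : Bool :=
  match L[i]?, R[b - 1 + i]? with
  | _, none => false
  | none, some _ => true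
  | some x, some y => decide (y < x)

/-- The jeu de taquin operator `𝓕`: slide into the position above the top of the left
column; the result has shape `λ(a+1, b−1, c)`. -/
def Fop : TC → Option TC := fun t =>
  let b := t.1; let L := t.2.1; let R := t.2.2
  if b = 0 then none else
    match (List.range (L.length + 1)).find? (fun i => FCond b L R i) with
    | none => none
    | some i =>
        match R[b - 1 + i]? with
        | some y => some (b - 1, L.take i ++ y :: L.drop i, R.eraseIdx (b - 1 + i))
        | none => none

def ECond (b : ℕ) (L R : List ℕ) (i : ℕ) : Bool :=
  match L[i]? with
  | none => false
  | some x =>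
      if b + i = 0 then true
      else match R[b + i - 1]? with
        | none => true
        | some y => decide (y < x)

/-- The jeu de taquin operator `𝓔`: slide into the position below the bottom of the right
column; the result has shape `λ(a−1, b+1, c)`. -/
def Eop : TC → Option TC := fun t =>
  let b := t.1; let L := t.2.1; let R := t.2.2
  if L.length + b ≤ R.length then none else
    match ((List.range (R.length - b + 1)).reverse).find? (fun i => ECond b L R i) with
    | none => none
    | some i =>
        match L[i]? with
        | some x => some (b + 1, L.eraseIdx i, R.insertIdx (b + i) x)
        | none => none

/-- Iteration of a partial operator. -/
def iterO {α : Type} (g : α → Option α) : ℕ → α → Option α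
  | 0, t => some t
  | k + 1, t => (g t).bind (iterO g k)

/-- Bounded boolean test of two-column semistandardness (overlap part only). -/
def ssdB (b : ℕ) (U V : List ℕ) : Bool :=
  (List.range U.length).all fun i =>
    match U[i]?, V[b + i]? with
    | some x, some y => decide (x ≤ y)
    | _, _ => true

/-- The canonical offset of a pair of columns `(U, V)` (`U` left, `V` right): the least `b`
such that the two-column arrangement with offset `b` is semistandard; this realizes `(U,V)`
as the two-column tableau `T` with `(T^L, T^R) = (U, V)` and `r_T = 0`. -/
def pairOffset (U V : List ℕ) : ℕ :=
  match (List.range (V.length + 1)).find? (fun b =>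
      decide (V.length ≤ U.length + b) && ssdB b U V) with
  | some b => b
  | none => V.length

/-- `𝓕` on a pair of single columns. -/
def pairF (U V : List ℕ) : Option (List ℕ × List ℕ) :=
  (Fop (pairOffset U V, U, V)).map fun t => (t.2.1, t.2.2)

/-- `𝓔` on a pair of single columns. -/
def pairE (U V : List ℕ) : Option (List ℕ × List ℕ) :=
  (Eop (pairOffset U V, U, V)).map fun t => (t.2.1, t.2.2)

/-- `𝓕_i` on a tuple of columns (components listed right-to-left, 0-based index `k = i−1`):
apply `𝓕` to the pair formed by components `k+1` (left) and `k` (right). -/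
def FiOp (k : ℕ) (us : List (List ℕ)) : Option (List (List ℕ)) :=
  match us[k]?, us[k+1]? with
  | some V, some U => (pairF U V).map fun p => (us.set (k+1) p.1).set k p.2
  | _, _ => none

/-- `𝓔_i` on a tuple of columns. -/
def EiOp (k : ℕ) (us : List (List ℕ)) : Option (List (List ℕ)) :=
  match us[k]?, us[k+1]? with
  | some V, some U => (pairE U V).map fun p => (us.set (k+1) p.1).set k p.2
  | _, _ => none

end KN

/-!
Call row `i` of the left column *open* when `L[i]` exceeds the right-column entry `R[b+i-1]`
diagonally above it (`ECond` and `FCond` fix the conventions at the ends of the columns); for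
`a, b > 0`, `r_T = 0` says exactly that some row is open. `𝓔` moves the left entry of the lowest
open row `i ≤ c` into the right column, and `𝓕` moves the right entry diagonally above the
topmost open row into the left column. Strictness of the columns and the row inequalities keep
the result semistandard, and the moved entry opens a row of the result, so again `r = 0`. After
`𝓔` has moved row `i`, row `i` is the topmost open row of the result, with the moved entry
diagonally above it, so `𝓕` moves it back, and symmetrically. Since `𝓔` is defined exactly when
`a > 0` and `𝓕` exactly when `b > 0`, the iterates of `T` form one string of length `a + b`.
-/

namespace List

theorem insertIdx_eq_take_append_drop {α : Type*} (x : α) :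
    ∀ {i : ℕ} {l : List α}, i ≤ l.length → l.insertIdx i x = l.take i ++ x :: l.drop i
  | 0, _, _ => rfl
  | _ + 1, [], h => by simp at h
  | i + 1, y :: l, h => by
    rw [insertIdx_succ_cons, insertIdx_eq_take_append_drop x (i := i) (by simpa using h)]
    rfl

theorem IsChain.insertIdx {α : Type*} {R : α → α → Prop} {l : List α} {i : ℕ} {x : α}
    (h : l.IsChain R) (hi : i ≤ l.length) (hprev : ∀ y, l[i - 1]? = some y → 0 < i → R y x)
    (hnext : ∀ z, l[i]? = some z → R x z) : (l.insertIdx i x).IsChain R := by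
  rw [insertIdx_eq_take_append_drop x hi, List.isChain_append, List.isChain_cons, head?_drop]
  refine ⟨h.take i, ⟨hnext, h.drop i⟩, fun y hy z hz => ?_⟩
  simp only [head?_cons, Option.mem_some_iff] at hz
  subst hz
  rcases Nat.eq_zero_or_pos i with rfl | hpos
  · simp at hy
  · rw [getLast?_take, if_neg hpos.ne', getElem?_eq_getElem (by omega)] at hy
    exact hprev y (by simpa [getElem?_eq_getElem (show i - 1 < l.length by omega)] using hy) hpos

theorem IsChain.lt_of_getElem? {α : Type*} [Preorder α] {l : List α} (h : l.IsChain (· < ·))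
    {i j : ℕ} {x y : α} (hij : i < j) (hx : l[i]? = some x) (hy : l[j]? = some y) : x < y := by
  rw [isChain_iff_pairwise, pairwise_iff_getElem] at h
  obtain ⟨hi, rfl⟩ := getElem?_eq_some_iff.1 hx
  obtain ⟨hj, rfl⟩ := getElem?_eq_some_iff.1 hy
  exact h i j hi hj hij

theorem find?_reverse_range_eq_some {p : ℕ → Bool} {n i : ℕ} (hi : i < n) (hp : p i)
    (hgt : ∀ j, i < j → j < n → p j = false) : (range n).reverse.find? p = some i := by
  induction n with
  | zero => omega
  | succ n ih =>
    rw [range_succ, reverse_append, reverse_singleton, singleton_append, find?_cons]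
    rcases Nat.lt_or_ge i n with h | h
    · rw [hgt n h n.lt_succ_self]
      exact ih h fun j hij hjn => hgt j hij (Nat.lt_succ_of_lt hjn)
    · obtain rfl : i = n := by omega
      rw [hp]

end List

namespace KN

theorem exists_iterO_eq_some {α : Type} {g : α → Option α} {P : ℕ → α → Prop} {n : ℕ}
    (hg : ∀ m t, m < n → P m t → ∃ t', g t = some t' ∧ P (m + 1) t') :
    ∀ k {m : ℕ} {t : α}, P m t → m + k ≤ n →
      ∃ t', iterO g k t = some t' ∧ P (m + k) t'
  | 0, _, t, h, _ => ⟨t, rfl, h⟩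
  | k + 1, m, t, h, hk => by
    obtain ⟨t₁, h₁, hP₁⟩ := hg m t (by omega) h
    obtain ⟨t', h', hP'⟩ := exists_iterO_eq_some hg k hP₁ (by omega)
    rw [Nat.add_right_comm] at hP'
    exact ⟨t', by simp only [iterO, h₁, Option.bind_some, h'], hP'⟩

section Slides

variable {a b c i x y : ℕ} {L R : List ℕ}

theorem ECond_eq_true_iff : ECond b L R i = true ↔
    ∃ x, L[i]? = some x ∧ ∀ y, R[b + i - 1]? = some y → 0 < b + i → y < x := by
  unfold ECond
  rcases L[i]? with _ | x
  · simp
  · by_cases h0 : b + i = 0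
    · simp [h0]
    · rcases R[b + i - 1]? with _ | y <;> simp; omega

theorem FCond_eq_true_iff : FCond b L R i = true ↔
    ∃ y, R[b - 1 + i]? = some y ∧ ∀ x, L[i]? = some x → y < x := by
  unfold FCond
  rcases R[b - 1 + i]? with _ | y <;> rcases L[i]? with _ | x <;> simp

theorem exists_isGreatest_ECond (hL : L.length = c + a) (hR : R.length = b + c)
    (hr : SlideZero a b L R) (ha : 0 < a) :
    ∃ i, IsGreatest {j | j ≤ c ∧ ECond b L R j} i := by
  have hne : {j | j ≤ c ∧ ECond b L R j}.Nonempty := by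
    rcases hr with ha0 | hb0 | ⟨i, x, y, hx, hy, hyx⟩
    · omega
    · refine ⟨0, Nat.zero_le c, ECond_eq_true_iff.2 ⟨L[0], ?_, fun _ _ h => by omega⟩⟩
      exact List.getElem?_eq_getElem (by omega)
    · have : b + i - 1 < R.length := (List.getElem?_eq_some_iff.1 hy).1
      refine ⟨i, by omega, ECond_eq_true_iff.2 ⟨x, hx, fun y' hy' _ => ?_⟩⟩
      rw [hy, Option.some_inj] at hy'
      exact hy' ▸ hyx
  have hbdd : BddAbove {j | j ≤ c ∧ ECond b L R j} := ⟨c, fun _ hj => hj.1⟩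
  exact ⟨sSup _, Nat.sSup_mem hne hbdd, fun _ hj => le_csSup hbdd hj⟩

theorem le_of_isGreatest_ECond (hR : R.length = b + c)
    (hi : IsGreatest {j | j ≤ c ∧ ECond b L R j} i) {j : ℕ} (hij : i < j)
    (hx : L[j]? = some x) (hy : R[b + j - 1]? = some y) : x ≤ y := by
  by_contra hlt
  have : b + j - 1 < R.length := (List.getElem?_eq_some_iff.1 hy).1
  have hj : j ∈ {j | j ≤ c ∧ ECond b L R j} := by
    refine ⟨by omega, ECond_eq_true_iff.2 ⟨x, hx, fun y' hy' _ => ?_⟩⟩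
    rw [hy, Option.some_inj] at hy'
    omega
  exact absurd (hi.2 hj) (by omega)

theorem lt_getElem?_of_isGreatest_ECond (hL : L.length = c + a) (hR : R.length = b + c)
    (ha : 0 < a) (hcL : L.IsChain (· < ·)) (hi : IsGreatest {j | j ≤ c ∧ ECond b L R j} i)
    (hx : L[i]? = some x) (hy : R[b + i]? = some y) : x < y := by
  have : b + i < R.length := (List.getElem?_eq_some_iff.1 hy).1
  have hx' : L[i + 1]? = some L[i + 1] := List.getElem?_eq_getElem (by omega)
  calc x < L[i + 1] := hcL.lt_of_getElem? i.lt_succ_self hx hx'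
    _ ≤ y := le_of_isGreatest_ECond hR hi i.lt_succ_self hx' (by simpa [← add_assoc] using hy)

theorem Eop_eq_of_isGreatest (hL : L.length = c + a) (hR : R.length = b + c) (ha : 0 < a)
    (hi : IsGreatest {j | j ≤ c ∧ ECond b L R j} i) (hx : L[i]? = some x) :
    Eop (b, L, R) = some (b + 1, L.eraseIdx i, R.insertIdx (b + i) x) := by
  have hfind : ((List.range (R.length - b + 1)).reverse).find? (ECond b L R) = some i := by
    refine List.find?_reverse_range_eq_some (by have := hi.1.1; omega) hi.1.2 fun j hij hj => ?_
    have hjc : j ≤ c := by omega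
    by_contra h
    exact absurd (hi.2 ⟨hjc, by simpa using h⟩) (by omega)
  unfold Eop
  simp only [if_neg (show ¬L.length + b ≤ R.length by omega), hfind, hx]

theorem pairSSD_Eop (hL : L.length = c + a) (hR : R.length = b + c) (ha : 0 < a)
    (hssd : PairSSD b L R) (hi : IsGreatest {j | j ≤ c ∧ ECond b L R j} i)
    (hx : L[i]? = some x) :
    PairSSD (b + 1) (L.eraseIdx i) (R.insertIdx (b + i) x) := by
  obtain ⟨hcL, hcR, hrow⟩ := hssd
  have hcL : L.IsChain (· < ·) := hcL
  have hcR : R.IsChain (· < ·) := hcR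
  have hic := hi.1.1
  refine ⟨hcL.sublist (L.eraseIdx_sublist i), hcR.insertIdx (by omega) ?_ ?_, ?_⟩
  · obtain ⟨x', hx', hlt⟩ := ECond_eq_true_iff.1 hi.1.2
    rw [hx, Option.some_inj] at hx'
    exact hx' ▸ hlt
  · exact fun z => lt_getElem?_of_isGreatest_ECond hL hR ha hcL hi hx
  intro j u v hu hv
  rw [List.getElem?_eraseIdx] at hu
  rw [List.getElem?_insertIdx] at hv
  split_ifs at hu hv with h1 h2 h3 h4 h5 h6 <;> try omega
  · have : b + j < R.length := by have := (List.getElem?_eq_some_iff.1 hv).1; omega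
    have hR' : R[b + j]? = some R[b + j] := List.getElem?_eq_getElem this
    exact (hrow j u _ hu hR').trans (hcR.lt_of_getElem? (by omega) hR' hv).le
  · rw [Option.some_inj] at hv
    exact hv ▸ (hcL.lt_of_getElem? h1 hu hx).le
  · refine le_of_isGreatest_ECond hR hi (j := j + 1) (by omega) hu ?_
    rwa [show b + (j + 1) - 1 = b + 1 + j - 1 by omega]

theorem slideZero_Eop (hL : L.length = c + a) (hcL : L.IsChain (· < ·)) (hic : i ≤ c)
    (hbi : b + i ≤ R.length) (hx : L[i]? = some x) :
    SlideZero (a - 1) (b + 1) (L.eraseIdx i) (R.insertIdx (b + i) x) := by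
  refine or_iff_not_imp_left.2 fun ha => Or.inr ⟨i, L[i + 1], x, ?_, ?_, ?_⟩
  · rw [List.getElem?_eraseIdx_of_ge le_rfl]
    exact List.getElem?_eq_getElem (by omega)
  · rw [show b + 1 + i - 1 = b + i by omega, List.getElem?_insertIdx_self, if_pos hbi]
  · exact hcL.lt_of_getElem? i.lt_succ_self hx (List.getElem?_eq_getElem (by omega))

theorem exists_isLeast_FCond (hL : L.length = c + a) (hR : R.length = b + c)
    (hr : SlideZero a b L R) (hb : 0 < b) : ∃ i, IsLeast {j | FCond b L R j} i := by
  have hne : {j | FCond b L R j}.Nonempty := by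
    rcases hr with ha0 | hb0 | ⟨i, x, y, hx, hy, hyx⟩
    · refine ⟨c, FCond_eq_true_iff.2 ⟨R[b - 1 + c], ?_, fun x hx => ?_⟩⟩
      · exact List.getElem?_eq_getElem (by omega)
      · exact absurd (List.getElem?_eq_some_iff.1 hx).1 (by omega)
    · omega
    · refine ⟨i, FCond_eq_true_iff.2 ⟨y, by rwa [show b - 1 + i = b + i - 1 by omega], ?_⟩⟩
      intro x' hx'
      rw [hx, Option.some_inj] at hx'
      exact hx' ▸ hyx
  exact ⟨sInf _, Nat.sInf_mem hne, fun _ => Nat.sInf_le⟩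

theorem le_of_isLeast_FCond (hi : IsLeast {j | FCond b L R j} i) {j : ℕ} (hji : j < i)
    (hx : L[j]? = some x) (hy : R[b - 1 + j]? = some y) : x ≤ y := by
  by_contra hlt
  have hj : j ∈ {j | FCond b L R j} := by
    refine FCond_eq_true_iff.2 ⟨y, hy, fun x' hx' => ?_⟩
    rw [hx, Option.some_inj] at hx'
    omega
  exact absurd (hi.2 hj) (by omega)

theorem getElem?_lt_of_isLeast_FCond (hcR : R.IsChain (· < ·))
    (hi : IsLeast {j | FCond b L R j} i) (hy : R[b - 1 + i]? = some y)
    (hx : L[i - 1]? = some x) (hpos : 0 < i) : x < y := by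
  have : b - 1 + i < R.length := (List.getElem?_eq_some_iff.1 hy).1
  have hy' : R[b - 1 + (i - 1)]? = some R[b - 1 + (i - 1)] := List.getElem?_eq_getElem (by omega)
  calc x ≤ R[b - 1 + (i - 1)] := le_of_isLeast_FCond hi (by omega) hx hy'
    _ < y := hcR.lt_of_getElem? (by omega) hy' hy

theorem Fop_eq_of_isLeast (hb : 0 < b) (hi : IsLeast {j | FCond b L R j} i)
    (hy : R[b - 1 + i]? = some y) :
    Fop (b, L, R) = some (b - 1, L.insertIdx i y, R.eraseIdx (b - 1 + i)) := by
  have hiL : i ≤ L.length := by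
    by_contra h
    have hR : b - 1 + L.length < R.length := by
      have := (List.getElem?_eq_some_iff.1 hy).1; omega
    have hmem : L.length ∈ {j | FCond b L R j} := by
      refine FCond_eq_true_iff.2 ⟨_, List.getElem?_eq_getElem hR, fun x hx => ?_⟩
      exact absurd (List.getElem?_eq_some_iff.1 hx).1 (lt_irrefl _)
    exact h (hi.2 hmem)
  have hfind : (List.range (L.length + 1)).find? (FCond b L R) = some i := by
    refine List.find?_range_eq_some.2 ⟨hi.1, List.mem_range.2 (by omega), fun j hj => ?_⟩
    have hj : j ∉ {j | FCond b L R j} := fun h => absurd (hi.2 h) (by omega)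
    simpa using hj
  unfold Fop
  simp only [if_neg hb.ne', hfind, hy, List.insertIdx_eq_take_append_drop y hiL]

theorem pairSSD_Fop (hb : 0 < b) (hssd : PairSSD b L R) (hi : IsLeast {j | FCond b L R j} i)
    (hiL : i ≤ L.length) (hy : R[b - 1 + i]? = some y) :
    PairSSD (b - 1) (L.insertIdx i y) (R.eraseIdx (b - 1 + i)) := by
  obtain ⟨hcL, hcR, hrow⟩ := hssd
  have hcL : L.IsChain (· < ·) := hcL
  have hcR : R.IsChain (· < ·) := hcR
  obtain ⟨y', hy', hlt⟩ := FCond_eq_true_iff.1 hi.1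
  rw [hy, Option.some_inj] at hy'
  subst hy'
  refine ⟨hcL.insertIdx hiL (fun _ => getElem?_lt_of_isLeast_FCond hcR hi hy) hlt,
    hcR.sublist (R.eraseIdx_sublist _), ?_⟩
  intro j u v hu hv
  rw [List.getElem?_insertIdx] at hu
  rw [List.getElem?_eraseIdx] at hv
  split_ifs at hu hv with h1 h2 h3 h4 h5 <;> try omega
  · exact le_of_isLeast_FCond hi h1 hu hv
  · rw [Option.some_inj] at hu
    exact hu ▸ (hcR.lt_of_getElem? (by omega) hy hv).le
  · have : b + (j - 1) < R.length := by have := (List.getElem?_eq_some_iff.1 hv).1; omega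
    have hR' : R[b + (j - 1)]? = some R[b + (j - 1)] := List.getElem?_eq_getElem this
    exact (hrow _ u _ hu hR').trans (hcR.lt_of_getElem? (by omega) hR' hv).le

theorem slideZero_Fop (hcR : R.IsChain (· < ·)) (hi : i ≤ L.length)
    (hy : R[b - 1 + i]? = some y) :
    SlideZero (a + 1) (b - 1) (L.insertIdx i y) (R.eraseIdx (b - 1 + i)) := by
  have := (List.getElem?_eq_some_iff.1 hy).1
  refine Or.inr (or_iff_not_imp_left.2 fun hb => ⟨i, y, R[b - 1 + i - 1], ?_, ?_, ?_⟩)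
  · rw [List.getElem?_insertIdx_self, if_pos hi]
  · rw [List.getElem?_eraseIdx_of_lt (by omega)]
    exact List.getElem?_eq_getElem _
  · exact hcR.lt_of_getElem? (by omega) (List.getElem?_eq_getElem _) hy

theorem Fop_Eop (hssd : PairSSD b L R) (hbi : b + i ≤ R.length) (hx : L[i]? = some x) :
    Fop (b + 1, L.eraseIdx i, R.insertIdx (b + i) x) = some (b, L, R) := by
  obtain ⟨hcL, -, hrow⟩ := hssd
  have hcL : L.IsChain (· < ·) := hcL
  obtain ⟨hiL, rfl⟩ := List.getElem?_eq_some_iff.1 hx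
  have hx' : (R.insertIdx (b + i) L[i])[b + 1 - 1 + i]? = some L[i] := by
    rw [Nat.add_sub_cancel, List.getElem?_insertIdx_self, if_pos (by omega)]
  have hleast : IsLeast {j | FCond (b + 1) (L.eraseIdx i) (R.insertIdx (b + i) L[i]) j} i := by
    refine ⟨FCond_eq_true_iff.2 ⟨_, hx', fun x' hx' => ?_⟩, fun j hj => ?_⟩
    · rw [List.getElem?_eraseIdx_of_ge le_rfl] at hx'
      exact hcL.lt_of_getElem? i.lt_succ_self hx hx'
    · by_contra! hji
      obtain ⟨y, hy, hlt⟩ := FCond_eq_true_iff.1 hj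
      rw [Nat.add_sub_cancel, List.getElem?_insertIdx_of_lt (by omega)] at hy
      have hLj : L[j]? = some L[j] := List.getElem?_eq_getElem (by omega)
      have := hlt _ (by rwa [List.getElem?_eraseIdx_of_lt hji])
      have := hrow j _ _ hLj hy
      omega
  rw [Fop_eq_of_isLeast b.add_one_pos hleast hx', Nat.add_sub_cancel,
    List.insertIdx_eraseIdx_getElem hiL, List.eraseIdx_insertIdx_self]

theorem Eop_Fop (hL : L.length = c + a) (hR : R.length = b + c) (hb : 0 < b)
    (hssd : PairSSD b L R) (hy : R[b - 1 + i]? = some y) :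
    Eop (b - 1, L.insertIdx i y, R.eraseIdx (b - 1 + i)) = some (b, L, R) := by
  obtain ⟨-, hcR, hrow⟩ := hssd
  have hcR : R.IsChain (· < ·) := hcR
  obtain ⟨hbi, rfl⟩ := List.getElem?_eq_some_iff.1 hy
  have hiL : i ≤ L.length := by omega
  have hL' : (L.insertIdx i R[b - 1 + i]).length = c + (a + 1) := by
    rw [List.length_insertIdx_of_le_length hiL]
    omega
  have hR' : (R.eraseIdx (b - 1 + i)).length = b - 1 + c := by
    rw [List.length_eraseIdx_of_lt hbi]
    omega
  have hy' : (L.insertIdx i R[b - 1 + i])[i]? = some R[b - 1 + i] := by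
    rw [List.getElem?_insertIdx_self, if_pos hiL]
  have hgreatest : IsGreatest {j | j ≤ c ∧
      ECond (b - 1) (L.insertIdx i R[b - 1 + i]) (R.eraseIdx (b - 1 + i)) j} i := by
    refine ⟨⟨by omega, ECond_eq_true_iff.2 ⟨_, hy', fun z hz _ => ?_⟩⟩,
      fun j ⟨hjc, hj⟩ => ?_⟩
    · rw [List.getElem?_eraseIdx_of_lt (by omega)] at hz
      exact hcR.lt_of_getElem? (by omega) hz hy
    · by_contra! hij
      obtain ⟨x, hx, hlt⟩ := ECond_eq_true_iff.1 hj
      rw [List.getElem?_insertIdx_of_gt hij] at hx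
      have hRj : R[b + (j - 1)]? = some R[b + (j - 1)] := List.getElem?_eq_getElem (by omega)
      have hRj' : (R.eraseIdx (b - 1 + i))[b - 1 + j - 1]? = some R[b + (j - 1)] := by
        rwa [List.getElem?_eraseIdx_of_ge (by omega), show b - 1 + j - 1 + 1 = b + (j - 1) by omega]
      have := hlt _ hRj' (by omega)
      have := hrow _ _ _ hx hRj
      omega
  rw [Eop_eq_of_isGreatest hL' hR' a.add_one_pos hgreatest hy', Nat.sub_add_cancel hb,
    List.eraseIdx_insertIdx_self, List.insertIdx_eraseIdx_getElem hbi]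

end Slides

/-- `t = (b, L, R)` is a semistandard tableau of shape `λ(a,b,c)` with `r_t = 0`. -/
def IsTableauRZero (a b c : ℕ) : TC → Prop
  | (b', L, R) =>
    b' = b ∧ L.length = c + a ∧ R.length = b + c ∧ PairSSD b' L R ∧ SlideZero a b L R

namespace IsTableauRZero

variable {a b c k : ℕ} {t t' : TC}

theorem Eop_eq_none (h : IsTableauRZero a b c t) (ha : a = 0) : Eop t = none := by
  obtain ⟨b, L, R⟩ := t
  obtain ⟨rfl, hL, hR, -⟩ := h
  unfold Eop
  simp only [if_pos (show L.length + b ≤ R.length by omega)]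

theorem Fop_eq_none (h : IsTableauRZero a b c t) (hb : b = 0) : Fop t = none := by
  obtain ⟨b, L, R⟩ := t
  obtain ⟨rfl, -⟩ := h
  unfold Fop
  simp only [if_pos hb]

theorem exists_Eop (h : IsTableauRZero a b c t) (ha : 0 < a) :
    ∃ t', Eop t = some t' ∧ IsTableauRZero (a - 1) (b + 1) c t' ∧ Fop t' = some t := by
  obtain ⟨b, L, R⟩ := t
  obtain ⟨rfl, hL, hR, hssd, hr⟩ := h
  obtain ⟨i, hi⟩ := exists_isGreatest_ECond hL hR hr ha
  have hic := hi.1.1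
  have hbi : b + i ≤ R.length := by omega
  obtain ⟨x, hx⟩ : ∃ x, L[i]? = some x := ⟨L[i], List.getElem?_eq_getElem (by omega)⟩
  refine ⟨_, Eop_eq_of_isGreatest hL hR ha hi hx, ⟨rfl, ?_, ?_, pairSSD_Eop hL hR ha hssd hi hx,
    slideZero_Eop hL hssd.1 hic hbi hx⟩, Fop_Eop hssd hbi hx⟩
  · rw [List.length_eraseIdx_of_lt (List.getElem?_eq_some_iff.1 hx).1]
    omega
  · rw [List.length_insertIdx_of_le_length hbi]
    omega

theorem exists_Fop (h : IsTableauRZero a b c t) (hb : 0 < b) :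
    ∃ t', Fop t = some t' ∧ IsTableauRZero (a + 1) (b - 1) c t' ∧ Eop t' = some t := by
  obtain ⟨b, L, R⟩ := t
  obtain ⟨rfl, hL, hR, hssd, hr⟩ := h
  obtain ⟨i, hi⟩ := exists_isLeast_FCond hL hR hr hb
  obtain ⟨y, hy, -⟩ := FCond_eq_true_iff.1 hi.1
  have hbi : b - 1 + i < R.length := (List.getElem?_eq_some_iff.1 hy).1
  have hiL : i ≤ L.length := by omega
  refine ⟨_, Fop_eq_of_isLeast hb hi hy, ⟨rfl, ?_, ?_, pairSSD_Fop hb hssd hi hiL hy,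
    slideZero_Fop hssd.2.1 hiL hy⟩, Eop_Fop hL hR hb hssd hy⟩
  · rw [List.length_insertIdx_of_le_length hiL]
    omega
  · rw [List.length_eraseIdx_of_lt hbi]
    omega

theorem Eop_isSome_iff (h : IsTableauRZero a b c t) : (Eop t).isSome ↔ 0 < a := by
  refine ⟨fun hs => Nat.pos_of_ne_zero fun ha => ?_, fun ha => ?_⟩
  · simp [h.Eop_eq_none ha] at hs
  · obtain ⟨t', ht', -⟩ := h.exists_Eop ha
    simp [ht']

theorem Fop_isSome_iff (h : IsTableauRZero a b c t) : (Fop t).isSome ↔ 0 < b := by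
  refine ⟨fun hs => Nat.pos_of_ne_zero fun hb => ?_, fun hb => ?_⟩
  · simp [h.Fop_eq_none hb] at hs
  · obtain ⟨t', ht', -⟩ := h.exists_Fop hb
    simp [ht']

theorem of_Eop_eq_some (h : IsTableauRZero a b c t) (he : Eop t = some t') :
    IsTableauRZero (a - 1) (b + 1) c t' ∧ Fop t' = some t := by
  obtain ⟨t'', he', h'⟩ := h.exists_Eop (h.Eop_isSome_iff.1 (Option.isSome_of_eq_some he))
  rw [he, Option.some_inj] at he'
  subst he'
  exact h'

theorem of_Fop_eq_some (h : IsTableauRZero a b c t) (hf : Fop t = some t') :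
    IsTableauRZero (a + 1) (b - 1) c t' ∧ Eop t' = some t := by
  obtain ⟨t'', hf', h'⟩ := h.exists_Fop (h.Fop_isSome_iff.1 (Option.isSome_of_eq_some hf))
  rw [hf, Option.some_inj] at hf'
  subst hf'
  exact h'

theorem exists_iterO_Eop (h : IsTableauRZero a b c t) (hk : k ≤ a) :
    ∃ t', iterO Eop k t = some t' ∧ IsTableauRZero (a - k) (b + k) c t' := by
  have hstep : ∀ m t, m < a → IsTableauRZero (a - m) (b + m) c t →
      ∃ t', Eop t = some t' ∧ IsTableauRZero (a - (m + 1)) (b + (m + 1)) c t' := by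
    intro m t hm ht
    obtain ⟨t', ht', h', -⟩ := ht.exists_Eop (by omega)
    exact ⟨t', ht', by rwa [Nat.sub_sub] at h'⟩
  simpa using exists_iterO_eq_some hstep k (m := 0) (by simpa using h) (by omega)

theorem exists_iterO_Fop (h : IsTableauRZero a b c t) (hk : k ≤ b) :
    ∃ t', iterO Fop k t = some t' ∧ IsTableauRZero (a + k) (b - k) c t' := by
  have hstep : ∀ m t, m < b → IsTableauRZero (a + m) (b - m) c t →
      ∃ t', Fop t = some t' ∧ IsTableauRZero (a + (m + 1)) (b - (m + 1)) c t' := by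
    intro m t hm ht
    obtain ⟨t', ht', h', -⟩ := ht.exists_Fop (by omega)
    exact ⟨t', ht', by rwa [Nat.sub_sub] at h'⟩
  simpa using exists_iterO_eq_some hstep k (m := 0) (by simpa using h) (by omega)

theorem of_iterO_Eop (h : IsTableauRZero a b c t) (hk : k ≤ a) (ht : iterO Eop k t = some t') :
    IsTableauRZero (a - k) (b + k) c t' := by
  obtain ⟨t'', ht'', h'⟩ := h.exists_iterO_Eop hk
  rw [ht, Option.some_inj] at ht''
  exact ht'' ▸ h'

theorem of_iterO_Fop (h : IsTableauRZero a b c t) (hk : k ≤ b) (ht : iterO Fop k t = some t') :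
    IsTableauRZero (a + k) (b - k) c t' := by
  obtain ⟨t'', ht'', h'⟩ := h.exists_iterO_Fop hk
  rw [ht, Option.some_inj] at ht''
  exact ht'' ▸ h'

end IsTableauRZero

end KN

open KN

theorem two_column_jdt_sl2 (a b c : ℕ) (L R : List ℕ)
    (hL : L.length = c + a) (hR : R.length = b + c)
    (hssd : PairSSD b L R) (hr : SlideZero a b L R) :
    -- (1) `𝓔` is defined exactly when `a > 0`, produces a semistandard tableau of shape
    -- `λ(a−1,b+1,c)` with `r = 0`:
    ((Eop (b, L, R)).isSome ↔ 0 < a) ∧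
    (∀ b' L' R', Eop (b, L, R) = some (b', L', R') →
        b' = b + 1 ∧ L'.length = c + (a - 1) ∧ R'.length = (b + 1) + c ∧
        PairSSD b' L' R' ∧ SlideZero (a - 1) (b + 1) L' R') ∧
    -- (2) same for `𝓕` with shape `λ(a+1,b−1,c)`:
    ((Fop (b, L, R)).isSome ↔ 0 < b) ∧
    (∀ b' L' R', Fop (b, L, R) = some (b', L', R') →
        b' = b - 1 ∧ L'.length = c + (a + 1) ∧ R'.length = (b - 1) + c ∧
        PairSSD b' L' R' ∧ SlideZero (a + 1) (b - 1) L' R') ∧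
    -- (3) the `sl₂`-string structure: `𝓔^k T` is defined for all `k ≤ a`, `𝓕^l T` for all
    -- `l ≤ b`, the string has length exactly `a + b`, and `𝓔`, `𝓕` are mutually inverse:
    (∀ k ≤ a, (iterO Eop k (b, L, R)).isSome) ∧
    (∀ l ≤ b, (iterO Fop l (b, L, R)).isSome) ∧
    (∀ t, iterO Eop a (b, L, R) = some t → Eop t = none) ∧
    (∀ t, iterO Fop b (b, L, R) = some t → Fop t = none) ∧
    (∀ k t t', k < a → iterO Eop k (b, L, R) = some t → Eop t = some t' →
        Fop t' = some t) ∧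
    (∀ l t t', l < b → iterO Fop l (b, L, R) = some t → Fop t = some t' →
        Eop t' = some t) := by
  have hT : IsTableauRZero a b c (b, L, R) := ⟨rfl, hL, hR, hssd, hr⟩
  refine ⟨hT.Eop_isSome_iff, fun _ _ _ h => (hT.of_Eop_eq_some h).1,
    hT.Fop_isSome_iff, fun _ _ _ h => (hT.of_Fop_eq_some h).1,
    fun k hk => ?_, fun l hl => ?_,
    fun t ht => (hT.of_iterO_Eop le_rfl ht).Eop_eq_none (Nat.sub_self a),
    fun t ht => (hT.of_iterO_Fop le_rfl ht).Fop_eq_none (Nat.sub_self b),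
    fun k t t' hk ht he => ((hT.of_iterO_Eop hk.le ht).of_Eop_eq_some he).2,
    fun l t t' hl ht hf => ((hT.of_iterO_Fop hl.le ht).of_Fop_eq_some hf).2⟩
  · obtain ⟨t, ht, -⟩ := hT.exists_iterO_Eop hk
    simp [ht]
  · obtain ⟨t, ht, -⟩ := hT.exists_iterO_Fop hl
    simp [ht]
end

section
/- For single-column semistandard tableaux: if T is a tableau in T^{c_n}(a) (a two-column tableau of shape λ(a,0,c) over {n̄ < ⋯ < 1̄}), and T̃ is defined by gluing, below the column complementary to the right column of 𝓔^a T, the left column of 𝓔^a T, then T̃ is a Kashiwara-Nakashima column of type C_n of height n−a; that is, whenever T̃ contains both c̄ in row i₁ and c in row i₂ from the bottom with i₁ < i₂, one has i₁ + (n−a−i₂+1) ≤ c. -/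
open KN

/-- The tableau `~(^R T)`: the increasing column with entries the letters `k ∈ [n]`
(code `k−1`) such that `k̄` (code `2n−k`) does not occur in `^R T`. -/
def compBar (n : ℕ) (RT : List ℕ) : List ℕ :=
  (List.range n).filter fun j => ! RT.contains (2 * n - 1 - j)

/-- The map `T ↦ T̃` on `T^{c_n}(a)` (shape `λ(a,0,c)`, i.e. offset `b = 0`). -/
def tildeMap (n a : ℕ) (L R : List ℕ) : List ℕ :=
  match iterO Eop a (0, L, R) with
  | some t => compBar n t.2.2 ++ t.2.1
  | none => []

/-- The Kashiwara–Nakashima one-column condition (`c`-1) for a column of height `h`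
over `𝕁_n^×`: if `c̄` occurs at row `i₁` and `c` at row `i₂` from the bottom with
`i₁ < i₂`, then `i₁ + (h − i₂ + 1) ≤ c` (stated additively to avoid truncated
subtraction). -/
def KN1 (n h : ℕ) (l : List ℕ) : Prop :=
  ∀ c i₁ i₂, 1 ≤ c → c ≤ n →
    getB l i₁ = some (2 * n - c) → getB l i₂ = some (c - 1) → i₁ < i₂ →
      i₁ + h + 1 ≤ c + i₂

/-!
Each `𝓔` moves one entry `x` of the left column into the right column, from the lowest row whose
left entry exceeds the right entry one row above it. This maximality keeps the tableau
semistandard, and `r_T = 0` persists because the left entry below the vacated cell exceeds `x`.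
Hence `𝓔^a T` is a semistandard tableau of shape `λ(0, a, c)` built from the entries of `T`.
If `c̄` is the `p`-th entry of its left column and `c` the `k`-th entry of `~(^R T)`, the entries
of `^R T` from row `a + p` on are at least `c̄`, and the first `k` entries of `~(^R T)` are letters
`≤ c` whose bars are missing from `^R T`: these are distinct bars of letters `≤ c`, so there are
at most `c` of them, which is the one-column condition.
-/

namespace List

variable {α : Type*}

theorem Pairwise.rel_of_getElem?_of_lt {r : α → α → Prop} {l : List α} (hl : l.Pairwise r)
    {i j : ℕ} {u v : α} (hu : l[i]? = some u) (hv : l[j]? = some v) (hij : i < j) : r u v := by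
  obtain ⟨hj, rfl⟩ := getElem?_eq_some_iff.mp hv
  obtain ⟨hi, rfl⟩ := getElem?_eq_some_iff.mp hu
  exact pairwise_iff_getElem.mp hl i j hi hj hij

theorem Pairwise.insertIdx {r : α → α → Prop} {l : List α} {q : ℕ} {x : α}
    (hl : l.Pairwise r) (hlow : ∀ y ∈ l.take q, r y x) (hhigh : ∀ z ∈ l.drop q, r x z) :
    (l.insertIdx q x).Pairwise r := by
  by_cases hq : q ≤ l.length
  · obtain ⟨l₁, l₂, rfl, hlen, hins⟩ := exists_of_modifyTailIdx (x :: ·) hq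
    rw [take_left' hlen] at hlow
    rw [drop_left' hlen] at hhigh
    obtain ⟨h₁, h₂, h₁₂⟩ := pairwise_append.mp hl
    rw [List.insertIdx, hins, pairwise_append, pairwise_cons]
    refine ⟨h₁, ⟨hhigh, h₂⟩, fun y hy z hz => ?_⟩
    rcases mem_cons.mp hz with rfl | hz
    exacts [hlow y hy, h₁₂ y hy z hz]
  · rwa [insertIdx_of_length_lt (by omega)]

section Sorted

variable [Preorder α] {l : List α} {k : ℕ} {y : α}

theorem Pairwise.getElem_le_of_mem_drop (hl : l.Pairwise (· < ·)) (hk : k < l.length)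
    (hy : y ∈ l.drop k) : l[k] ≤ y := by
  have hd := hl.sublist (drop_sublist k l)
  rw [drop_eq_getElem_cons hk] at hy hd
  rcases mem_cons.mp hy with rfl | hy
  exacts [le_rfl, (rel_of_pairwise_cons hd hy).le]

theorem Pairwise.le_getElem_of_mem_take (hl : l.Pairwise (· < ·)) (hk : k < l.length)
    (hy : y ∈ l.take (k + 1)) : y ≤ l[k] := by
  have ht := hl.sublist (take_sublist (k + 1) l)
  rw [← take_concat_get' l k hk] at hy ht
  rcases mem_append.mp hy with hy | hy
  · exact (pairwise_append.mp ht).2.2 y hy _ (mem_singleton_self _) |>.le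
  · exact (mem_singleton.mp hy).le

end Sorted

theorem Nodup.length_le_of_forall_mem_Ico {l : List ℕ} (hl : l.Nodup) {lo hi : ℕ}
    (h : ∀ x ∈ l, lo ≤ x ∧ x < hi) : l.length ≤ hi - lo := by
  have hsub : l ⊆ range' lo (hi - lo) := fun x hx => mem_range'_1.mpr (by have := h x hx; omega)
  simpa using (hl.subperm hsub).length_le

theorem find?_range_reverse_eq_some {p : ℕ → Bool} {m i : ℕ}
    (h : (List.range m).reverse.find? p = some i) :
    i < m ∧ p i ∧ ∀ j, i < j → j < m → p j = false := by
  obtain ⟨hpi, k, hk, hki, hbefore⟩ := find?_eq_some_iff_getElem.mp h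
  simp only [length_reverse, length_range] at hk
  simp only [getElem_reverse, getElem_range, length_range] at hki hbefore
  refine ⟨by omega, hpi, fun j hij hjm => ?_⟩
  have := hbefore (m - 1 - j) (by omega)
  rwa [show m - 1 - (m - 1 - j) = j by omega, Bool.not_eq_true'] at this

end List

namespace KN

open List

theorem getB_eq_some {l : List ℕ} {i v : ℕ} :
    getB l i = some v ↔ ∃ k, k + i = l.length ∧ l[k]? = some v := by
  unfold getB
  split_ifs with h
  · refine ⟨fun hv => ⟨_, by omega, hv⟩, fun ⟨k, hk, hv⟩ => ?_⟩
    rwa [show l.length - i = k by omega]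
  · refine ⟨nofun, fun ⟨k, hk, hv⟩ => ?_⟩
    have := (List.getElem?_eq_some_iff.mp hv).1
    omega

section Slide

variable {b i x : ℕ} {L R : List ℕ}

/-- `hmax` is the maximality of the row `i` from which `𝓔` slides. -/
theorem PairSSD.slide (h : PairSSD b L R) (hlen : R.length < b + L.length)
    (hx : L[i]? = some x) (hlow : ∀ y ∈ R.take (b + i), y < x)
    (hmax : ∀ j y z, i < j → L[j]? = some y → R[b + j - 1]? = some z → y ≤ z) :
    PairSSD (b + 1) (L.eraseIdx i) (R.insertIdx (b + i) x) := by
  obtain ⟨hL, hR, hLR⟩ := h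
  replace hL := isChain_iff_pairwise.mp hL
  replace hR := isChain_iff_pairwise.mp hR
  have hhigh : ∀ z ∈ R.drop (b + i), x < z := by
    intro z hz
    have hk : b + i < R.length := by
      have := length_pos_of_mem hz
      rw [length_drop] at this
      omega
    have hi : i + 1 < L.length := by omega
    have hxL : x < L[i + 1] := hL.rel_of_getElem?_of_lt hx (getElem?_eq_getElem hi) (by omega)
    have hLR' : L[i + 1] ≤ R[b + i] := hmax (i + 1) _ _ (by omega) (getElem?_eq_getElem hi)
      (by rw [show b + (i + 1) - 1 = b + i by omega]; exact getElem?_eq_getElem hk)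
    have := hR.getElem_le_of_mem_drop hk hz
    omega
  refine ⟨isChain_iff_pairwise.mpr (hL.sublist (eraseIdx_sublist L i)),
    isChain_iff_pairwise.mpr (hR.insertIdx hlow hhigh), fun j u v hu hv => ?_⟩
  rw [getElem?_eraseIdx] at hu
  rw [getElem?_insertIdx] at hv
  split_ifs at hu hv
  · have hk : b + j < R.length := by have := (List.getElem?_eq_some_iff.mp hv).1; omega
    have := hLR j u _ hu (getElem?_eq_getElem hk)
    have := hR.rel_of_getElem?_of_lt (getElem?_eq_getElem hk) hv (by omega)
    omega
  · cases hv
    exact (hL.rel_of_getElem?_of_lt hu hx ‹j < i›).le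
  · omega
  · omega
  · omega
  · exact hmax (j + 1) u v (by omega) hu (by rwa [show b + (j + 1) - 1 = b + 1 + j - 1 by omega])

end Slide

section Eop

variable {a b c i x : ℕ} {L R : List ℕ}

theorem ECond_of_add_eq_zero (hx : L[i]? = some x) (h0 : b + i = 0) : ECond b L R i = true := by
  simp [ECond, hx, h0]

theorem ECond_eq_decide {y : ℕ} (hx : L[i]? = some x) (hy : R[b + i - 1]? = some y)
    (h0 : b + i ≠ 0) : ECond b L R i = decide (y < x) := by
  simp only [ECond, hx, if_neg h0, hy]

theorem Eop_eq_some (hlen : R.length < L.length + b)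
    (hfind : (range (R.length - b + 1)).reverse.find? (ECond b L R) = some i)
    (hx : L[i]? = some x) : Eop (b, L, R) = some (b + 1, L.eraseIdx i, R.insertIdx (b + i) x) := by
  simp [Eop, Nat.not_le.mpr hlen, hfind, hx]

theorem exists_find?_ECond (hL : R.length < L.length + b) (hz : SlideZero (a + 1) b L R) :
    ∃ i, (range (R.length - b + 1)).reverse.find? (ECond b L R) = some i := by
  refine Option.isSome_iff_exists.mp (find?_isSome.mpr ?_)
  simp only [mem_reverse, mem_range]
  rcases hz with h | rfl | ⟨i, x, y, hx, hy, hyx⟩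
  · omega
  · exact ⟨0, by omega, ECond_of_add_eq_zero (getElem?_eq_getElem (by omega)) rfl⟩
  · have := (List.getElem?_eq_some_iff.mp hy).1
    by_cases h0 : b + i = 0
    · exact ⟨i, by omega, ECond_of_add_eq_zero hx h0⟩
    · exact ⟨i, by omega, by rw [ECond_eq_decide hx hy h0]; exact decide_eq_true hyx⟩

theorem Eop_spec (hL : L.length = c + (a + 1)) (hR : R.length = b + c) (h : PairSSD b L R)
    (hz : SlideZero (a + 1) b L R) :
    ∃ L' R', Eop (b, L, R) = some (b + 1, L', R') ∧ L'.length = c + a ∧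
      R'.length = b + 1 + c ∧ PairSSD (b + 1) L' R' ∧ SlideZero a (b + 1) L' R' ∧
      L' ++ R' ⊆ L ++ R := by
  obtain ⟨i, hfind⟩ := exists_find?_ECond (by omega) hz
  obtain ⟨hi, hEi, habove⟩ := find?_range_reverse_eq_some hfind
  obtain ⟨x, hx⟩ : ∃ x, L[i]? = some x := ⟨L[i], getElem?_eq_getElem (by omega)⟩
  have hlow : ∀ y ∈ R.take (b + i), y < x := by
    intro y hy
    have hbi : b + i ≠ 0 := by rintro h0; simp [h0] at hy
    have hk : b + i - 1 < R.length := by omega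
    rw [ECond_eq_decide hx (getElem?_eq_getElem hk) hbi, decide_eq_true_iff] at hEi
    rw [show b + i = b + i - 1 + 1 by omega] at hy
    exact ((isChain_iff_pairwise.mp h.2.1).le_getElem_of_mem_take hk hy).trans_lt hEi
  have hmax : ∀ j y z, i < j → L[j]? = some y → R[b + j - 1]? = some z → y ≤ z := by
    intro j y z hij hy hz
    have := (List.getElem?_eq_some_iff.mp hz).1
    have hE := habove j hij (by omega)
    rw [ECond_eq_decide hy hz (by omega)] at hE
    simpa using hE
  refine ⟨_, _, Eop_eq_some (by omega) hfind hx, ?_, ?_, h.slide (by omega) hx hlow hmax, ?_,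
    ?_⟩
  · rw [length_eraseIdx_of_lt (by omega)]; omega
  · rw [length_insertIdx_of_le_length (by omega)]; omega
  · rcases Nat.eq_zero_or_pos a with rfl | ha
    · exact Or.inl rfl
    have hi' : i + 1 < L.length := by omega
    refine Or.inr (Or.inr ⟨i, L[i + 1], x, ?_, ?_, ?_⟩)
    · rw [getElem?_eraseIdx, if_neg (lt_irrefl i)]
      exact getElem?_eq_getElem hi'
    · rw [show b + 1 + i - 1 = b + i by omega, getElem?_insertIdx_self, if_pos (by omega)]
    · exact (isChain_iff_pairwise.mp h.1).rel_of_getElem?_of_lt hx (getElem?_eq_getElem hi')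
        (lt_add_one i)
  · intro y hy
    simp only [mem_append] at hy ⊢
    rcases hy with hy | hy
    · exact Or.inl (eraseIdx_subset hy)
    · rcases (mem_insertIdx (by omega)).mp hy with rfl | hy
      exacts [Or.inl (mem_of_getElem? hx), Or.inr hy]

theorem iterO_Eop_spec {a b : ℕ} {L R : List ℕ} (hL : L.length = c + a) (hR : R.length = b + c)
    (h : PairSSD b L R) (hz : SlideZero a b L R) :
    ∃ L' R', iterO Eop a (b, L, R) = some (b + a, L', R') ∧ L'.length = c ∧
      R'.length = b + a + c ∧ PairSSD (b + a) L' R' ∧ L' ++ R' ⊆ L ++ R := by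
  induction a generalizing b L R with
  | zero => exact ⟨L, R, rfl, hL, hR, h, Subset.refl _⟩
  | succ a ih =>
    obtain ⟨L₁, R₁, hE, hL₁, hR₁, h₁, hz₁, hs₁⟩ := Eop_spec hL hR h hz
    obtain ⟨L', R', hit, hL', hR', h', hs'⟩ := ih hL₁ hR₁ h₁ hz₁
    rw [show b + (a + 1) = b + 1 + a by omega]
    exact ⟨L', R', by simp [iterO, hE, hit], hL', by omega, h', List.Subset.trans hs' hs₁⟩

end Eop

variable {n : ℕ} {R : List ℕ}

theorem mem_compBar {j : ℕ} : j ∈ compBar n R ↔ j < n ∧ 2 * n - 1 - j ∉ R := by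
  simp [compBar]

theorem compBar_pairwise : (compBar n R).Pairwise (· < ·) :=
  pairwise_lt_range.filter _

theorem length_compBar_add_length (hR : R.Nodup) (hr : ∀ x ∈ R, n ≤ x ∧ x < 2 * n) :
    (compBar n R).length + R.length = n := by
  have hperm : ((range n).filter fun j => R.contains (2 * n - 1 - j)).Perm
      (R.map (2 * n - 1 - ·)) := by
    refine (perm_ext_iff_of_nodup (nodup_range.filter _) (hR.map_on ?_)).mpr fun j => ?_
    · intro y hy z hz hyz
      have := hr y hy
      have := hr z hz
      omega
    · simp only [mem_filter, mem_range, elem_eq_mem, decide_eq_true_eq, mem_map]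
      constructor
      · rintro ⟨hj, hmem⟩
        exact ⟨_, hmem, by omega⟩
      · rintro ⟨y, hy, rfl⟩
        have := hr y hy
        exact ⟨by omega, by rwa [show 2 * n - 1 - (2 * n - 1 - y) = y by omega]⟩
  have := length_eq_length_filter_add (l := range n) fun j => R.contains (2 * n - 1 - j)
  rw [length_range, hperm.length_eq, length_map] at this
  unfold compBar
  omega

/-- The code `e` stands for the letter `e + 1`, whose bar is coded `2n - 1 - e`: the bars of the
first `k + 1` letters of `compBar n R` and the entries of `R` from position `m` on are distinct
bars of letters `≤ e + 1`. -/
theorem succ_add_length_sub_le_of_compBar (hR : R.Pairwise (· < ·)) (hr : ∀ x ∈ R, x < 2 * n)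
    {k m e y : ℕ} (hk : (compBar n R)[k]? = some e) (hm : R[m]? = some y)
    (hy : 2 * n - 1 - e ≤ y) : k + 1 + (R.length - m) ≤ e + 1 := by
  obtain ⟨hkC, rfl⟩ := List.getElem?_eq_some_iff.mp hk
  obtain ⟨hmR, rfl⟩ := List.getElem?_eq_some_iff.mp hm
  have hbars : ∀ z ∈ ((compBar n R).take (k + 1)).map (2 * n - 1 - ·),
      2 * n - 1 - (compBar n R)[k] ≤ z ∧ z < 2 * n ∧ z ∉ R := by
    rintro _ hz
    obtain ⟨j, hj, rfl⟩ := mem_map.mp hz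
    have := compBar_pairwise.le_getElem_of_mem_take hkC hj
    have := mem_compBar.mp (mem_of_mem_take hj)
    exact ⟨by omega, by omega, this.2⟩
  have hnd : (((compBar n R).take (k + 1)).map (2 * n - 1 - ·) ++ R.drop m).Nodup := by
    refine (Nodup.map_on ?_ (compBar_pairwise.nodup.sublist (take_sublist _ _))).append
      (hR.nodup.sublist (drop_sublist _ _)) fun z hz hz' => (hbars z hz).2.2 (mem_of_mem_drop hz')
    intro i hi j hj hij
    have := (mem_compBar.mp (mem_of_mem_take hi)).1
    have := (mem_compBar.mp (mem_of_mem_take hj)).1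
    omega
  have := hnd.length_le_of_forall_mem_Ico (lo := 2 * n - 1 - (compBar n R)[k]) (hi := 2 * n)
    fun z hz => by
      rcases mem_append.mp hz with hz | hz
      · exact ⟨(hbars z hz).1, (hbars z hz).2.1⟩
      · exact ⟨hy.trans (hR.getElem_le_of_mem_drop hmR hz), hr z (mem_of_mem_drop hz)⟩
  simp only [length_append, length_map, length_take, length_drop] at this
  have := (mem_compBar.mp (getElem_mem hkC)).1
  omega

theorem KN1_compBar_append {a : ℕ} {L : List ℕ} (h : PairSSD a L R)
    (hlen : a + L.length ≤ R.length) (hL : ∀ x ∈ L, n ≤ x) (hR : ∀ x ∈ R, x < 2 * n) :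
    KN1 n (compBar n R ++ L).length (compBar n R ++ L) := by
  intro c i₁ i₂ hc _ h₁ h₂ _
  obtain ⟨k₁, hk₁, h₁⟩ := getB_eq_some.mp h₁
  obtain ⟨k₂, hk₂, h₂⟩ := getB_eq_some.mp h₂
  rw [length_append] at hk₁ hk₂ ⊢
  rw [getElem?_append] at h₁ h₂
  split_ifs at h₁ h₂ with hC₁ hC₂
  · have := (mem_compBar.mp (mem_of_getElem? h₁)).1
    omega
  · have := (mem_compBar.mp (mem_of_getElem? h₁)).1
    omega
  · set p := k₁ - (compBar n R).length
    have hp : a + p < R.length := by have := (List.getElem?_eq_some_iff.mp h₁).1; omega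
    have hy := h.2.2 p _ _ h₁ (getElem?_eq_getElem hp)
    have := succ_add_length_sub_le_of_compBar (isChain_iff_pairwise.mp h.2.1) hR h₂
      (getElem?_eq_getElem hp) (by omega)
    omega
  · have := hL _ (mem_of_getElem? h₂)
    omega

end KN

theorem tilde_is_KN_column_general (n a c : ℕ) (L R : List ℕ)
    (hL : L.length = c + a) (hR : R.length = c)
    (hssd : PairSSD 0 L R)
    (hrangeL : ∀ x ∈ L, n ≤ x ∧ x < 2 * n) (hrangeR : ∀ x ∈ R, n ≤ x ∧ x < 2 * n) :
    (tildeMap n a L R).length = n - a ∧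
    (tildeMap n a L R).Chain' (· < ·) ∧
    (∀ x ∈ tildeMap n a L R, x < 2 * n) ∧
    KN1 n (n - a) (tildeMap n a L R) := by
  obtain ⟨LA, RA, hit, hLA_len, hRA_len, hssdA, hsub⟩ :=
    iterO_Eop_spec (b := 0) hL (by omega) hssd (Or.inr (Or.inl rfl))
  have hLA : ∀ x ∈ LA, n ≤ x ∧ x < 2 * n := fun x hx =>
    (List.mem_append.mp (hsub (List.mem_append_left _ hx))).elim (hrangeL x) (hrangeR x)
  have hRA : ∀ x ∈ RA, n ≤ x ∧ x < 2 * n := fun x hx =>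
    (List.mem_append.mp (hsub (List.mem_append_right _ hx))).elim (hrangeL x) (hrangeR x)
  have hlen : (compBar n RA ++ LA).length = n - a := by
    have := length_compBar_add_length (List.isChain_iff_pairwise.mp hssdA.2.1).nodup hRA
    rw [List.length_append]
    omega
  have htilde : tildeMap n a L R = compBar n RA ++ LA := by simp [tildeMap, hit]
  rw [htilde, ← hlen]
  refine ⟨rfl, List.isChain_iff_pairwise.mpr (List.pairwise_append.mpr ⟨compBar_pairwise,
    List.isChain_iff_pairwise.mp hssdA.1, fun x hx y hy => ?_⟩), fun x hx => ?_,
    KN1_compBar_append hssdA (by omega) (fun x hx => (hLA x hx).1) fun x hx => (hRA x hx).2⟩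
  · have := (mem_compBar.mp hx).1
    have := (hLA y hy).1
    omega
  · rcases List.mem_append.mp hx with hx | hx
    · have := (mem_compBar.mp hx).1
      omega
    · exact (hLA x hx).2

theorem tilde_is_KN_column (n a c : ℕ) (hn : 2 ≤ n) (ha : a < n) (L R : List ℕ)
    (hL : L.length = c + a) (hR : R.length = c)
    (hssd : PairSSD 0 L R)
    (hrangeL : ∀ x ∈ L, n ≤ x ∧ x < 2 * n) (hrangeR : ∀ x ∈ R, n ≤ x ∧ x < 2 * n) :
    (tildeMap n a L R).length = n - a ∧
    (tildeMap n a L R).Chain' (· < ·) ∧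
    (∀ x ∈ tildeMap n a L R, x < 2 * n) ∧
    KN1 n (n - a) (tildeMap n a L R) :=
  tilde_is_KN_column_general n a c L R hL hR hssd hrangeL hrangeR
end
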